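/- arXiv:1906.10271 — 2 statements merged into one kernel-verified Lean document; each statement's English description precedes it below -/
import Mathlib

section
/- Let V, W be bounded operators on a nonzero Hilbert space H with W* V = I and suppose ker(V*) ≠ {0} and ker(W*) ≠ {0}. Then ker(V*) is not orthogonal to ker(W*): there exist v ∈ ker(V*) and w ∈ ker(W*) with ⟨w, v⟩ ≠ 0. -/
/-!
Let `v ≠ 0` with `V* v = 0`. Since `W* V = 1`, the vector `w := v - V W* v` lies in `ker W*`, and
`⟪w, v⟫ = ‖v‖² - ⟪W* v, V* v⟫ = ‖v‖² ≠ 0`.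
-/

open scoped InnerProductSpace

namespace ContinuousLinearMap

variable {𝕜 E F : Type*} [RCLike 𝕜] [NormedAddCommGroup E] [InnerProductSpace 𝕜 E]
  [CompleteSpace E] [NormedAddCommGroup F] [InnerProductSpace 𝕜 F] [CompleteSpace F]
  {V W : E →L[𝕜] F}

theorem adjoint_apply_sub_apply_adjoint_eq_zero (h : Function.LeftInverse (adjoint W) V)
    (x : F) : adjoint W (x - V (adjoint W x)) = 0 := by
  rw [map_sub, h, sub_self]

theorem inner_sub_apply_adjoint_self_of_adjoint_apply_eq_zero {x : F} (hx : adjoint V x = 0) :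
    ⟪x - V (adjoint W x), x⟫_𝕜 = (‖x‖ : 𝕜) ^ 2 := by
  rw [inner_sub_left, ← adjoint_inner_right, hx, inner_zero_right, sub_zero,
    inner_self_eq_norm_sq_to_K]

theorem exists_mem_ker_adjoint_inner_ne_zero (h : Function.LeftInverse (adjoint W) V)
    {v : F} (hv : adjoint V v = 0) (hv₀ : v ≠ 0) :
    ∃ w ∈ LinearMap.ker (adjoint W : F →ₗ[𝕜] E), ⟪w, v⟫_𝕜 ≠ 0 :=
  ⟨v - V (adjoint W v), adjoint_apply_sub_apply_adjoint_eq_zero h v, by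
    rw [inner_sub_apply_adjoint_self_of_adjoint_apply_eq_zero hv]
    exact pow_ne_zero 2 (RCLike.ofReal_ne_zero.mpr (norm_ne_zero_iff.mpr hv₀))⟩

end ContinuousLinearMap

theorem stmt_7_general {H : Type*} [NormedAddCommGroup H] [InnerProductSpace ℂ H]
    [CompleteSpace H] (V W : H →L[ℂ] H)
    (h : (ContinuousLinearMap.adjoint W) * V = 1)
    (hV : LinearMap.ker (ContinuousLinearMap.adjoint V : H →ₗ[ℂ] H) ≠ ⊥) :
    ∃ v ∈ LinearMap.ker (ContinuousLinearMap.adjoint V : H →ₗ[ℂ] H),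
      ∃ w ∈ LinearMap.ker (ContinuousLinearMap.adjoint W : H →ₗ[ℂ] H),
        ⟪w, v⟫_ℂ ≠ 0 := by
  obtain ⟨v, hv, hv₀⟩ := Submodule.exists_mem_ne_zero_of_ne_bot hV
  exact ⟨v, hv, ContinuousLinearMap.exists_mem_ker_adjoint_inner_ne_zero
    (fun x => by rw [← mul_apply_eq_comp, h, one_apply_eq_self]) hv hv₀⟩

/-- If `W* V = I` and the kernels of `V*` and `W*` are nontrivial, then
these kernels are not orthogonal to each other. -/
theorem stmt_7 {H : Type*} [NormedAddCommGroup H] [InnerProductSpace ℂ H]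
    [CompleteSpace H] [Nontrivial H] (V W : H →L[ℂ] H)
    (h : (ContinuousLinearMap.adjoint W) * V = 1)
    (hV : LinearMap.ker (ContinuousLinearMap.adjoint V : H →ₗ[ℂ] H) ≠ ⊥)
    (hW : LinearMap.ker (ContinuousLinearMap.adjoint W : H →ₗ[ℂ] H) ≠ ⊥) :
    ∃ v ∈ LinearMap.ker (ContinuousLinearMap.adjoint V : H →ₗ[ℂ] H),
      ∃ w ∈ LinearMap.ker (ContinuousLinearMap.adjoint W : H →ₗ[ℂ] H),
        ⟪w, v⟫_ℂ ≠ 0 :=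
  stmt_7_general V W h hV
end

section
/- Let V, W be a biisometric pair on a Hilbert space H (V* W = I = W* V). Suppose v ∈ ker(V*) and w ∈ ker(W*) satisfy ⟨w, v⟩ = 1. Define φ_n = V^n w and ψ_n = W^n v. Then {φ_n} and {ψ_n} are biorthogonal: ⟨φ_m, ψ_n⟩ = δ_{mn} for all m, n ≥ 0. -/
open scoped InnerProductSpace

namespace ContinuousLinearMap

variable {𝕜 H : Type*} [RCLike 𝕜] [NormedAddCommGroup H] [InnerProductSpace 𝕜 H]
  [CompleteSpace H]

theorem inner_apply_apply_of_adjoint_mul_eq_one {V W : H →L[𝕜] H} (h : adjoint V * W = 1)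
    (x y : H) : ⟪W x, V y⟫_𝕜 = ⟪x, y⟫_𝕜 := by
  rw [← adjoint_inner_left, ← mul_apply_eq_comp, h, one_apply_eq_self]

theorem inner_apply_left_eq_zero_of_adjoint_apply_eq_zero {W : H →L[𝕜] H} {w : H}
    (hw : adjoint W w = 0) (x : H) : ⟪W x, w⟫_𝕜 = 0 := by
  rw [← adjoint_inner_right, hw, inner_zero_right]

theorem inner_apply_right_eq_zero_of_adjoint_apply_eq_zero {V : H →L[𝕜] H} {v : H}
    (hv : adjoint V v = 0) (y : H) : ⟪v, V y⟫_𝕜 = 0 := by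
  rw [← adjoint_inner_left, hv, inner_zero_left]

/-- The pairing `⟪W^n v, V^m w⟫` peels off one `W` against one `V` at a time until one side
is exhausted; a leftover `W` is orthogonal to `w ∈ ker W†`, a leftover `V` to `v ∈ ker V†`. -/
theorem inner_pow_apply_pow_apply_of_adjoint_mul_eq_one {V W : H →L[𝕜] H}
    (h : adjoint V * W = 1) {v w : H} (hv : adjoint V v = 0) (hw : adjoint W w = 0) :
    ∀ m n : ℕ, ⟪(W ^ n) v, (V ^ m) w⟫_𝕜 = if m = n then ⟪v, w⟫_𝕜 else 0
  | 0, 0 => by simp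
  | 0, n + 1 => by
    rw [pow_succ', mul_apply_eq_comp, pow_zero, one_apply_eq_self,
      inner_apply_left_eq_zero_of_adjoint_apply_eq_zero hw]
    simp
  | m + 1, 0 => by
    rw [pow_succ', mul_apply_eq_comp, pow_zero, one_apply_eq_self,
      inner_apply_right_eq_zero_of_adjoint_apply_eq_zero hv]
    simp
  | m + 1, n + 1 => by
    rw [pow_succ', pow_succ', mul_apply_eq_comp, mul_apply_eq_comp,
      inner_apply_apply_of_adjoint_mul_eq_one h,
      inner_pow_apply_pow_apply_of_adjoint_mul_eq_one h hv hw m n]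
    simp

end ContinuousLinearMap

theorem stmt_8_general {H : Type*} [NormedAddCommGroup H] [InnerProductSpace ℂ H]
    [CompleteSpace H] (V W : H →L[ℂ] H)
    (h1 : (ContinuousLinearMap.adjoint V) * W = 1)
    (v w : H) (hv : (ContinuousLinearMap.adjoint V) v = 0)
    (hw : (ContinuousLinearMap.adjoint W) w = 0)
    (hwv : ⟪w, v⟫_ℂ = 1)
    (φ ψ : ℕ → H) (hφ : ∀ n, φ n = (V ^ n) w) (hψ : ∀ n, ψ n = (W ^ n) v) :
    ∀ m n : ℕ, ⟪ψ n, φ m⟫_ℂ = if m = n then 1 else 0 := by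
  have hvw : ⟪v, w⟫_ℂ = 1 := by rw [← inner_conj_symm, hwv, map_one]
  intro m n
  rw [hφ, hψ, ContinuousLinearMap.inner_pow_apply_pow_apply_of_adjoint_mul_eq_one h1 hv hw, hvw]

/-- For a biisometric pair `V, W` and kernel vectors `v, w` with `⟨w, v⟩ = 1`,
the sequences `φ_n = V^n w` and `ψ_n = W^n v` are biorthogonal. -/
theorem stmt_8 {H : Type*} [NormedAddCommGroup H] [InnerProductSpace ℂ H]
    [CompleteSpace H] (V W : H →L[ℂ] H)
    (h1 : (ContinuousLinearMap.adjoint V) * W = 1)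
    (h2 : (ContinuousLinearMap.adjoint W) * V = 1)
    (v w : H) (hv : (ContinuousLinearMap.adjoint V) v = 0)
    (hw : (ContinuousLinearMap.adjoint W) w = 0)
    (hwv : ⟪w, v⟫_ℂ = 1)
    (φ ψ : ℕ → H) (hφ : ∀ n, φ n = (V ^ n) w) (hψ : ∀ n, ψ n = (W ^ n) v) :
    ∀ m n : ℕ, ⟪ψ n, φ m⟫_ℂ = if m = n then 1 else 0 :=
  stmt_8_general V W h1 v w hv hw hwv φ ψ hφ hψ
end
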